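/- Every stable model of a propositional normal logic program P is a minimal model of P: if M is a stable model of P and N ⊆ M is a model of P, then N = M. -/
import Mathlib


structure Clause (α : Type) where
  head : α
  pos : Finset α
  neg : Finset α
deriving DecidableEq

/-- The Gelfond–Lifschitz reduct of program `P` with respect to `M`. -/
def reduct {α : Type} (P : Finset (Clause α)) (M : Set α) : Set (Clause α) :=
  {C | ∃ D ∈ P, (∀ r ∈ D.neg, r ∉ M) ∧ C = ⟨D.head, D.pos, ∅⟩}

/-- `X` is closed under the rules of the definite program `Q`. -/
def DefClosed {α : Type} (Q : Set (Clause α)) (X : Set α) : Prop :=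
  ∀ C ∈ Q, (∀ q ∈ C.pos, q ∈ X) → C.head ∈ X

/-- Least model of a definite program: least set of atoms closed under its rules. -/
def LM {α : Type} (Q : Set (Clause α)) : Set α :=
  ⋂₀ {X | DefClosed Q X}

/-- `M` is a stable model of `P`. -/
def IsStable {α : Type} (P : Finset (Clause α)) (M : Set α) : Prop :=
  M = LM (reduct P M)


/-- `N` is a model of the normal program `P`. -/
def IsModel {α : Type} (P : Finset (Clause α)) (N : Set α) : Prop :=
  ∀ C ∈ P, (∀ q ∈ C.pos, q ∈ N) → (∀ r ∈ C.neg, r ∉ N) → C.head ∈ N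

/-- Every stable model of `P` is a minimal model of `P`. -/
theorem stable_is_minimal_model {α : Type} (P : Finset (Clause α)) (M N : Set α)
    (hM : IsStable P M) (hN : IsModel P N) (hsub : N ⊆ M) : N = M := by
  refine Set.Subset.antisymm hsub ?_
  have hclosed : DefClosed (reduct P M) N := by
    rintro C ⟨D, hD, hneg, rfl⟩ hpos
    exact hN D hD hpos (fun r hr hrN => hneg r hr (hsub hrN))
  rw [hM]
  exact Set.sInter_subset_of_mem hclosed
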